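/- In the orthogonal setting, for all a, b, c, d ∈ V and every X ∈ gl(V)_B one has ⁅D_{a,b}, ⁅D_{c,d}, X⁆⁆ = B(b, Xd)·D_{c,a} − B(a, Xd)·D_{c,b} − B(b, Xc)·D_{d,a} + B(a, Xc)·D_{d,b} + B(b,d)·D_{Xc,a} − B(a,d)·D_{Xc,b} − B(b,c)·D_{Xd,a} + B(a,c)·D_{Xd,b}. -/

import Mathlib

/-- The endomorphism `D_{a,b} : x ↦ B(x,a)·b − B(x,b)·a` of the orthogonal setting. -/
def DOrth {k V : Type*} [Field k] [AddCommGroup V] [Module k V]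
    (B : LinearMap.BilinForm k V) (a b : V) : Module.End k V :=
  (B.flip a).smulRight b - (B.flip b).smulRight a

/-!
Every skew endomorphism `X` acts on the operators `D_{a,b}` as a derivation,
`⁅X, D_{a,b}⁆ = D_{Xa,b} + D_{a,Xb}`, and when `B` is symmetric each `D_{a,b}` is itself skew.
Applying the first rule to `X` and then to `D_{a,b}` turns the double bracket into
`-(D_{D_{a,b}Xc, d} + D_{Xc, D_{a,b}d} + D_{D_{a,b}c, Xd} + D_{c, D_{a,b}Xd})`, and expanding
`D_{a,b}` in the inner slots gives the eight terms.
-/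

section DOrth

variable {k V : Type*} [Field k] [AddCommGroup V] [Module k V] (B : LinearMap.BilinForm k V)

@[simp]
theorem dOrth_apply (a b x : V) : DOrth B a b x = B x a • b - B x b • a := rfl

theorem dOrth_swap (a b : V) : DOrth B b a = -DOrth B a b := by
  ext x
  simp only [dOrth_apply, LinearMap.neg_apply, neg_sub]

theorem dOrth_dOrth_left (a b e f : V) :
    DOrth B (DOrth B a b e) f = B e a • DOrth B b f - B e b • DOrth B a f := by
  ext x
  simp only [dOrth_apply, map_sub, map_smul, LinearMap.sub_apply, LinearMap.smul_apply,
    smul_eq_mul]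
  module

theorem dOrth_dOrth_right (a b e f : V) :
    DOrth B e (DOrth B a b f) = B f a • DOrth B e b - B f b • DOrth B e a := by
  rw [dOrth_swap, dOrth_dOrth_left, dOrth_swap B b e, dOrth_swap B a e]
  module

theorem lie_dOrth_of_skew {X : Module.End k V} (hX : ∀ u v, B (X u) v = -B u (X v)) (a b : V) :
    ⁅X, DOrth B a b⁆ = DOrth B (X a) b + DOrth B a (X b) := by
  ext x
  simp only [Ring.lie_def, LinearMap.sub_apply, Module.End.mul_apply, LinearMap.add_apply,
    dOrth_apply, map_sub, map_smul, hX]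
  module

theorem dOrth_skew_of_symm (hB : ∀ u v, B u v = B v u) (a b : V) :
    ∀ u v, B (DOrth B a b u) v = -B u (DOrth B a b v) := by
  intro u v
  simp only [dOrth_apply, map_sub, map_smul, LinearMap.sub_apply, LinearMap.smul_apply,
    smul_eq_mul, hB u a, hB u b, hB v a, hB v b]
  ring

end DOrth

theorem stmt15_general {k V : Type*} [Field k] [AddCommGroup V] [Module k V]
    (B : LinearMap.BilinForm k V) (hsymm : ∀ u v : V, B u v = B v u)
    (a b c d : V) :
    ∀ X : Module.End k V, (∀ u v : V, B (X u) v = -B u (X v)) →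
      ⁅DOrth B a b, ⁅DOrth B c d, X⁆⁆ =
        B b (X d) • DOrth B c a - B a (X d) • DOrth B c b
          - B b (X c) • DOrth B d a + B a (X c) • DOrth B d b
          + B b d • DOrth B (X c) a - B a d • DOrth B (X c) b
          - B b c • DOrth B (X d) a + B a c • DOrth B (X d) b := by
  intro X hX
  have hD := dOrth_skew_of_symm B hsymm a b
  have hcd : ⁅DOrth B c d, X⁆ = -(DOrth B (X c) d + DOrth B c (X d)) := by
    rw [← lie_dOrth_of_skew B hX, Ring.lie_def, Ring.lie_def, neg_sub]
  calc ⁅DOrth B a b, ⁅DOrth B c d, X⁆⁆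
      = -(⁅DOrth B a b, DOrth B (X c) d⁆ + ⁅DOrth B a b, DOrth B c (X d)⁆) := by
        rw [hcd]
        simp only [Ring.lie_def]
        noncomm_ring
    _ = -(DOrth B (DOrth B a b (X c)) d + DOrth B (X c) (DOrth B a b d)
          + (DOrth B (DOrth B a b c) (X d) + DOrth B c (DOrth B a b (X d)))) := by
        rw [lie_dOrth_of_skew B hD, lie_dOrth_of_skew B hD]
    _ = _ := by
        rw [dOrth_dOrth_left, dOrth_dOrth_right, dOrth_dOrth_left, dOrth_dOrth_right,
          dOrth_swap B b d, dOrth_swap B a d, dOrth_swap B b (X d), dOrth_swap B a (X d),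
          hsymm (X c) a, hsymm (X c) b, hsymm d a, hsymm d b, hsymm c a, hsymm c b,
          hsymm (X d) a, hsymm (X d) b]
        module

/-- In the orthogonal setting, for every `X ∈ gl(V)_B`:
`⁅D_{a,b}, ⁅D_{c,d}, X⁆⁆ = B(b,Xd)·D_{c,a} − B(a,Xd)·D_{c,b} − B(b,Xc)·D_{d,a}
  + B(a,Xc)·D_{d,b} + B(b,d)·D_{Xc,a} − B(a,d)·D_{Xc,b} − B(b,c)·D_{Xd,a}
  + B(a,c)·D_{Xd,b}`. -/
theorem stmt15 {k V : Type*} [Field k] [AddCommGroup V] [Module k V]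
    (hchar : (2 : k) ≠ 0)
    (B : LinearMap.BilinForm k V) (hsymm : ∀ u v : V, B u v = B v u)
    (a b c d : V) :
    ∀ X : Module.End k V, (∀ u v : V, B (X u) v = -B u (X v)) →
      ⁅DOrth B a b, ⁅DOrth B c d, X⁆⁆ =
        B b (X d) • DOrth B c a - B a (X d) • DOrth B c b
          - B b (X c) • DOrth B d a + B a (X c) • DOrth B d b
          + B b d • DOrth B (X c) a - B a d • DOrth B (X c) b
          - B b c • DOrth B (X d) a + B a c • DOrth B (X d) b :=
  stmt15_general B hsymm a b c d
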